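/- arXiv:2004.13948 — 4 statements merged into one kernel-verified Lean document; each statement's English description precedes it below -/
import Mathlib

section
/- Define h(x) = ((1+x)²/(4x))·log₂((1+x)²/(4x)) − ((1−x)²/(4x))·log₂((1−x)²/(4x)) for x ∈ (0,1]. Then h(1) = 0 and h is strictly decreasing on (0,1]. -/
/-- The auxiliary entropy function `h`. -/
noncomputable def hAux (x : ℝ) : ℝ :=
  (1 + x) ^ 2 / (4 * x) * Real.logb 2 ((1 + x) ^ 2 / (4 * x)) -
    (1 - x) ^ 2 / (4 * x) * Real.logb 2 ((1 - x) ^ 2 / (4 * x))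

/-!
Since `(1 + x)² / (4x) = 1 + (1 - x)² / (4x)`, `h` is the thermal entropy
`g(t) = (1 + t) log₂ (1 + t) - t log₂ t` evaluated at `t = (1 - x)² / (4x)`. On `(0, 1]` this `t`
decreases strictly from `∞` to `0`, while `g` is strictly increasing on `[0, ∞)` because
`g'(t) = log₂ ((1 + t) / t) > 0`; at `x = 1` we get `h 1 = g 0 = 0`.
-/

open Real Set

/-- The von Neumann entropy, in bits, of a single-mode thermal state with mean photon number `t`. -/
noncomputable def thermalEntropy (t : ℝ) : ℝ :=
  (1 + t) * logb 2 (1 + t) - t * logb 2 t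

lemma thermalEntropy_eq (t : ℝ) :
    thermalEntropy t = ((1 + t) * log (1 + t) - t * log t) / log 2 := by
  simp only [thermalEntropy, logb]
  ring

lemma continuous_thermalEntropy : Continuous thermalEntropy := by
  rw [funext thermalEntropy_eq]
  exact ((continuous_mul_log.comp (continuous_const.add continuous_id)).sub
    continuous_mul_log).div_const _

lemma hasDerivAt_thermalEntropy {t : ℝ} (ht : 0 < t) :
    HasDerivAt thermalEntropy (logb 2 (1 + t) - logb 2 t) t := by
  have h := (((hasDerivAt_mul_log (by positivity : 1 + t ≠ 0)).comp t
    ((hasDerivAt_id t).const_add 1)).sub (hasDerivAt_mul_log ht.ne')).div_const (log 2)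
  rw [funext thermalEntropy_eq]
  refine h.congr_deriv ?_
  simp only [logb]
  ring

lemma thermalEntropy_strictMonoOn : StrictMonoOn thermalEntropy (Ici 0) := by
  refine strictMonoOn_of_deriv_pos (convex_Ici 0) continuous_thermalEntropy.continuousOn
    fun t ht => ?_
  rw [interior_Ici] at ht
  rw [(hasDerivAt_thermalEntropy ht).deriv, sub_pos]
  exact logb_lt_logb one_lt_two ht (lt_one_add t)

lemma hAux_eq_thermalEntropy {x : ℝ} (hx : x ≠ 0) :
    hAux x = thermalEntropy ((1 - x) ^ 2 / (4 * x)) := by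
  have hsucc : (1 + x) ^ 2 / (4 * x) = 1 + (1 - x) ^ 2 / (4 * x) := by
    field_simp
    ring
  rw [hAux, hsucc, thermalEntropy]

lemma strictAntiOn_one_sub_sq_div :
    StrictAntiOn (fun x : ℝ => (1 - x) ^ 2 / (4 * x)) (Ioc 0 1) := by
  intro a ⟨ha, _⟩ b ⟨hb, hb1⟩ hab
  have hab1 : a * b < 1 := by nlinarith
  rw [div_lt_div_iff₀ (by positivity) (by positivity)]
  -- `b (1 - a)² - a (1 - b)² = (b - a)(1 - a b)`
  nlinarith [mul_pos (sub_pos.2 hab) (sub_pos.2 hab1)]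

theorem hAux_one_and_strictAnti :
    hAux 1 = 0 ∧ StrictAntiOn hAux (Set.Ioc (0 : ℝ) 1) := by
  refine ⟨by norm_num [hAux], ?_⟩
  have hmaps : MapsTo (fun x : ℝ => (1 - x) ^ 2 / (4 * x)) (Ioc 0 1) (Ici 0) :=
    fun x hx => div_nonneg (sq_nonneg _) (mul_nonneg zero_le_four (le_of_lt hx.1))
  exact (thermalEntropy_strictMonoOn.comp_strictAntiOn strictAntiOn_one_sub_sq_div hmaps).congr
    fun x hx => (hAux_eq_thermalEntropy hx.1.ne').symm
end

section
/- Let κ, τ₁, τ₂ be real numbers with κ ≥ 0, τ₁ > 0, τ₂ ≠ 0, and κ² + τ₁·τ₂ ≥ 0, and suppose 2κ² + τ₁τ₂ − 2√(κ²(κ² + τ₁τ₂)) > 0. Define λ₋ = (κ + √(κ² + τ₁·τ₂))/τ₁ and let E = (2κ² + τ₁τ₂ − 2√(κ²(κ² + τ₁τ₂)))/τ₂². Then λ₋² · E = 1. -/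
theorem lambda_minus_sq_mul_E_eq_one
    (k t1 t2 : ℝ) (hk : 0 ≤ k) (ht1 : 0 < t1) (ht2 : t2 ≠ 0)
    (hdisc : 0 ≤ k ^ 2 + t1 * t2)
    (hpos : 0 < 2 * k ^ 2 + t1 * t2 - 2 * Real.sqrt (k ^ 2 * (k ^ 2 + t1 * t2))) :
    ((k + Real.sqrt (k ^ 2 + t1 * t2)) / t1) ^ 2 *
      ((2 * k ^ 2 + t1 * t2 - 2 * Real.sqrt (k ^ 2 * (k ^ 2 + t1 * t2))) / t2 ^ 2)
      = 1 := by
  set s := Real.sqrt (k ^ 2 + t1 * t2) with hs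
  have hs2 : s ^ 2 = k ^ 2 + t1 * t2 := Real.sq_sqrt hdisc
  have hsplit : Real.sqrt (k ^ 2 * (k ^ 2 + t1 * t2)) = k * s := by
    rw [Real.sqrt_mul (sq_nonneg k), Real.sqrt_sq hk]
  rw [hsplit]
  have key : 2 * k ^ 2 + t1 * t2 - 2 * (k * s) = (s - k) ^ 2 := by ring_nf; nlinarith
  rw [key, div_pow, div_mul_div_comm]
  rw [div_eq_one_iff_eq (by positivity)]
  nlinarith [sq_nonneg (s - k), sq_nonneg (s + k)]
end

section
/- Let A, B be 2×2 real symmetric positive definite matrices with B⁻¹ ≤ A (in the Loewner order). Then there exists a 2×2 real symmetric positive definite matrix z with B⁻¹ ≤ z ≤ A; moreover for any such z, the 4×4 matrix (A ⊕ B) − (z ⊕ z⁻¹) is positive semidefinite, where A ⊕ B denotes block-diagonal sum. -/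
/-!
The matrix `B⁻¹` itself lies between `B⁻¹` and `A`. For the second claim, the Schur complements
of the block matrix `[[B, 1], [1, z]]` with respect to either diagonal block show that
`B⁻¹ ≤ z ↔ z⁻¹ ≤ B`. Hence `(A ⊕ B) - (z ⊕ z⁻¹) = (A - z) ⊕ (B - z⁻¹)` is a block-diagonal
sum of positive semidefinite matrices.
-/

open Matrix

namespace Matrix

theorem fromBlocks_sub {l m n o α : Type*} [Sub α] (A : Matrix n l α) (B : Matrix n m α)
    (C : Matrix o l α) (D : Matrix o m α) (A' : Matrix n l α) (B' : Matrix n m α)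
    (C' : Matrix o l α) (D' : Matrix o m α) :
    fromBlocks A B C D - fromBlocks A' B' C' D' =
      fromBlocks (A - A') (B - B') (C - C') (D - D') := by
  ext (i | i) (j | j) <;> rfl

variable {m n R : Type*} [Fintype m] [Fintype n] [CommRing R] [PartialOrder R] [StarRing R]
  [StarOrderedRing R]

theorem PosSemidef.fromBlocks_zero {P : Matrix m m R} {Q : Matrix n n R}
    (hP : P.PosSemidef) (hQ : Q.PosSemidef) : (fromBlocks P 0 0 Q).PosSemidef := by
  rw [posSemidef_iff_dotProduct_mulVec]
  refine ⟨by simp [IsHermitian, fromBlocks_conjTranspose, hP.1.eq, hQ.1.eq], fun x => ?_⟩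
  rw [← Sum.elim_comp_inl_inr x, fromBlocks_mulVec, dotProduct_block]
  simp only [zero_mulVec, add_zero, zero_add]
  exact add_nonneg (hP.dotProduct_mulVec_nonneg _) (hQ.dotProduct_mulVec_nonneg _)

theorem posSemidef_sub_inv_comm {K : Type*} [Field K] [PartialOrder K] [StarRing K]
    [StarOrderedRing K] [DecidableEq n] {B z : Matrix n n K} (hB : B.PosDef)
    (hz : z.PosDef) : (z - B⁻¹).PosSemidef ↔ (B - z⁻¹).PosSemidef := by
  have := hB.isUnit.invertible
  have := hz.isUnit.invertible
  have h₁₁ := PosDef.fromBlocks₁₁ 1 z hB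
  have h₂₂ := PosDef.fromBlocks₂₂ B 1 hz
  simp only [conjTranspose_one, Matrix.one_mul, Matrix.mul_one] at h₁₁ h₂₂
  exact h₁₁.symm.trans h₂₂

end Matrix

theorem exists_z_and_block_posSemidef_general
    (A B : Matrix (Fin 2) (Fin 2) ℝ)
    (hBpd : B.PosDef)
    (hle : (A - B⁻¹).PosSemidef) :
    (∃ z : Matrix (Fin 2) (Fin 2) ℝ, z.IsSymm ∧ z.PosDef ∧
        (z - B⁻¹).PosSemidef ∧ (A - z).PosSemidef) ∧
    (∀ z : Matrix (Fin 2) (Fin 2) ℝ, z.IsSymm → z.PosDef →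
        (z - B⁻¹).PosSemidef → (A - z).PosSemidef →
        (Matrix.fromBlocks A 0 0 B - Matrix.fromBlocks z 0 0 z⁻¹).PosSemidef) := by
  refine ⟨⟨B⁻¹, ?_, hBpd.inv, by simpa using PosSemidef.zero, hle⟩, ?_⟩
  · simpa [IsHermitian, IsSymm] using hBpd.inv.isHermitian
  · intro z _ hz hBz hzA
    rw [fromBlocks_sub, sub_zero]
    exact hzA.fromBlocks_zero ((posSemidef_sub_inv_comm hBpd hz).mp hBz)

/-- Loewner order: `X ≤ Y` is encoded as `(Y - X).PosSemidef`. If `B⁻¹ ≤ A`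
then a symmetric positive definite `z` with `B⁻¹ ≤ z ≤ A` exists, and for any
such `z` the matrix `(A ⊕ B) - (z ⊕ z⁻¹)` is positive semidefinite. -/
theorem exists_z_and_block_posSemidef
    (A B : Matrix (Fin 2) (Fin 2) ℝ)
    (hA : A.IsSymm) (hB : B.IsSymm) (hApd : A.PosDef) (hBpd : B.PosDef)
    (hle : (A - B⁻¹).PosSemidef) :
    (∃ z : Matrix (Fin 2) (Fin 2) ℝ, z.IsSymm ∧ z.PosDef ∧
        (z - B⁻¹).PosSemidef ∧ (A - z).PosSemidef) ∧
    (∀ z : Matrix (Fin 2) (Fin 2) ℝ, z.IsSymm → z.PosDef →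
        (z - B⁻¹).PosSemidef → (A - z).PosSemidef →
        (Matrix.fromBlocks A 0 0 B - Matrix.fromBlocks z 0 0 z⁻¹).PosSemidef) :=
  exists_z_and_block_posSemidef_general A B hBpd hle
end

section
/- Let a, b > 0 and c > 0 with a·b − c² ≥ 1 and (1 − a·b + c²)² ≥ (a − b)². Set λ₊ = (a + b + 2c)/(1 + a·b − c² + √((1 − a·b + c²)² − (a − b)²)). Then the 2×2 matrix z_opt with eigenvalues λ₊ and 1/λ₊ and eigenvectors (1,1)ᵀ, (1,−1)ᵀ satisfies z_opt ≤ [[a,c],[c,b]] and [[a,−c],[−c,b]]⁻¹ ≤ z_opt in the Loewner order. -/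
set_option maxHeartbeats 1000000

open Matrix

lemma aux_t1 (a b c D L : ℝ) (hD : D ≠ 0)
    (h : (2 * a * ((L * D) * D) - (L * D) ^ 2 - D ^ 2)
        * (2 * b * ((L * D) * D) - (L * D) ^ 2 - D ^ 2)
      = (2 * c * ((L * D) * D) - (L * D) ^ 2 + D ^ 2) ^ 2) :
    (2 * a * L - L ^ 2 - 1) * (2 * b * L - L ^ 2 - 1) = (2 * c * L - L ^ 2 + 1) ^ 2 := by
  have h4 : (D ^ 2) ^ 2 ≠ 0 := pow_ne_zero _ (pow_ne_zero _ hD)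
  have hz : (D ^ 2) ^ 2 * ((2 * a * L - L ^ 2 - 1) * (2 * b * L - L ^ 2 - 1)
      - (2 * c * L - L ^ 2 + 1) ^ 2) = 0 := by linear_combination h
  have h0 := (mul_eq_zero.mp hz).resolve_left h4
  linarith

lemma aux_t2 (a b c M D L : ℝ) (hD : D ≠ 0)
    (h : (M * ((L * D) ^ 2 + D ^ 2) - 2 * b * ((L * D) * D))
        * (M * ((L * D) ^ 2 + D ^ 2) - 2 * a * ((L * D) * D))
      = (M * ((L * D) ^ 2 - D ^ 2) - 2 * c * ((L * D) * D)) ^ 2) :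
    ((L ^ 2 + 1) * M - 2 * b * L) * ((L ^ 2 + 1) * M - 2 * a * L)
      = ((L ^ 2 - 1) * M - 2 * c * L) ^ 2 := by
  have h4 : (D ^ 2) ^ 2 ≠ 0 := pow_ne_zero _ (pow_ne_zero _ hD)
  have hz : (D ^ 2) ^ 2 * (((L ^ 2 + 1) * M - 2 * b * L) * ((L ^ 2 + 1) * M - 2 * a * L)
      - ((L ^ 2 - 1) * M - 2 * c * L) ^ 2) = 0 := by linear_combination h
  have h0 := (mul_eq_zero.mp hz).resolve_left h4
  linarith

lemma psd2 (p q r : ℝ) (hp : 0 ≤ p) (hr : 0 ≤ r) (h : q ^ 2 ≤ p * r) :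
    (!![p, q; q, r]).PosSemidef := by
  refine Matrix.PosSemidef.of_dotProduct_mulVec_nonneg ?_ ?_
  · ext i j; fin_cases i <;> fin_cases j <;> simp [Matrix.conjTranspose_apply]
  · intro x
    have hx : star x ⬝ᵥ (!![p, q; q, r]) *ᵥ x
        = p * x 0 ^ 2 + 2 * q * (x 0 * x 1) + r * x 1 ^ 2 := by
      simp [Matrix.mulVec, dotProduct, Fin.sum_univ_two]
      ring
    rw [hx]
    rcases eq_or_lt_of_le hp with hp0 | hp0
    · have hq : q = 0 := by nlinarith [sq_nonneg q]
      rw [hq, ← hp0]; nlinarith [sq_nonneg (x 1)]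
    · nlinarith [sq_nonneg (p * x 0 + q * x 1), mul_nonneg (sub_nonneg.2 h) (sq_nonneg (x 1)), hp0]

lemma aux_sign (x y t : ℝ) (hsum : 0 ≤ x + y) (hprod : x * y = t ^ 2) : 0 ≤ x := by
  nlinarith [sq_nonneg t, sq_nonneg (x - y)]

lemma aux_cancel (D X : ℝ) (hD : 0 < D) (h : 0 ≤ D ^ 2 * X) : 0 ≤ X :=
  (mul_nonneg_iff_of_pos_left (pow_pos hD 2)).mp h

lemma aux_keyT (a b c s : ℝ) (ha : 0 < a) (hb : 0 < b) (hc : 0 < c)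
    (hphys : 1 ≤ a * b - c ^ 2) (hs0 : 0 ≤ s)
    (hs2 : s ^ 2 = (1 - a * b + c ^ 2) ^ 2 - (a - b) ^ 2) :
    0 ≤ (a + b) * ((a + b + 2 * c) * (1 + a * b - c ^ 2 + s))
      - (a + b + 2 * c) ^ 2 - (1 + a * b - c ^ 2 + s) ^ 2 := by
  have hK : 0 ≤ (a + c) ^ 2 + (b + c) ^ 2 - 2 := by
    nlinarith [sq_nonneg (a - b), sq_nonneg c, mul_pos ha hc, mul_pos hb hc]
  have hQ : 0 ≤ a ^ 2 + b ^ 2 - 2 * c ^ 2 - 2 := by nlinarith [sq_nonneg (a - b)]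
  have hSM : 0 ≤ s + (a * b - c ^ 2) - 1 := by linarith
  linarith [mul_nonneg hK hSM, hQ, hs2]

lemma aux_keyT2 (a b c s : ℝ) (ha : 0 < a) (hb : 0 < b) (hc : 0 < c)
    (hphys : 1 ≤ a * b - c ^ 2) (hs0 : 0 ≤ s) (hsle : s ≤ a * b - c ^ 2 - 1)
    (hs2 : s ^ 2 = (1 - a * b + c ^ 2) ^ 2 - (a - b) ^ 2) :
    0 ≤ (a * b - c ^ 2) * ((a + b + 2 * c) ^ 2 + (1 + a * b - c ^ 2 + s) ^ 2)
      - (a + b) * ((a + b + 2 * c) * (1 + a * b - c ^ 2 + s)) := by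
  have hSM : 0 ≤ s + (a * b - c ^ 2) - 1 := by linarith
  have hs3 : s ^ 3 = s * ((1 - a * b + c ^ 2) ^ 2 - (a - b) ^ 2) := by
    rw [pow_succ, hs2]; ring
  linarith [mul_nonneg hSM (by linarith : (0:ℝ) ≤ 2 * s),
    mul_nonneg hSM (by positivity : (0:ℝ) ≤ (a * b - c ^ 2 - 1 + s) ^ 2 + (a * b - c ^ 2 - 1 - s) ^ 2),
    mul_nonneg (by linarith : (0:ℝ) ≤ a * b - c ^ 2) (by linarith : (0:ℝ) ≤ a * b - c ^ 2 - 1),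
    mul_nonneg (sq_nonneg c) (by linarith : (0:ℝ) ≤ a * b - c ^ 2 - 1 - s),
    mul_nonneg (by positivity : (0:ℝ) ≤ c * (a + b)) (by linarith : (0:ℝ) ≤ a * b - c ^ 2 - 1 - s),
    hs2, hs3]

/-- The optimal block `z_opt = (λ₊/2)[[1,1],[1,1]] + (1/(2λ₊))[[1,-1],[-1,1]]`
for the balanced correlated state satisfies the Loewner constraints
`z_opt ≤ c_x = [[a,c],[c,b]]` and `c_p⁻¹ ≤ z_opt` with `c_p = [[a,-c],[-c,b]]`
(Loewner order encoded via positive semidefiniteness of differences). -/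
theorem z_opt_satisfies_constraints
    (a b c : ℝ) (ha : 0 < a) (hb : 0 < b) (hc : 0 < c)
    (hphys : 1 ≤ a * b - c ^ 2)
    (hdisc : (a - b) ^ 2 ≤ (1 - a * b + c ^ 2) ^ 2) :
    (!![a, c; c, b] -
        (((a + b + 2 * c) /
            (1 + a * b - c ^ 2 +
              Real.sqrt ((1 - a * b + c ^ 2) ^ 2 - (a - b) ^ 2)) / 2) •
            !![(1 : ℝ), 1; 1, 1] +
          (1 / (2 * ((a + b + 2 * c) /
            (1 + a * b - c ^ 2 +
              Real.sqrt ((1 - a * b + c ^ 2) ^ 2 - (a - b) ^ 2))))) •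
            !![(1 : ℝ), -1; -1, 1])).PosSemidef ∧
    ((((a + b + 2 * c) /
            (1 + a * b - c ^ 2 +
              Real.sqrt ((1 - a * b + c ^ 2) ^ 2 - (a - b) ^ 2)) / 2) •
            !![(1 : ℝ), 1; 1, 1] +
          (1 / (2 * ((a + b + 2 * c) /
            (1 + a * b - c ^ 2 +
              Real.sqrt ((1 - a * b + c ^ 2) ^ 2 - (a - b) ^ 2))))) •
            !![(1 : ℝ), -1; -1, 1]) -
        (!![a, -c; -c, b])⁻¹).PosSemidef := by
  have hsub : 0 ≤ (1 - a * b + c ^ 2) ^ 2 - (a - b) ^ 2 := by linarith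
  obtain ⟨s, hs_def⟩ : ∃ x : ℝ, x = Real.sqrt ((1 - a * b + c ^ 2) ^ 2 - (a - b) ^ 2) :=
    ⟨_, rfl⟩
  rw [← hs_def]
  have hs0 : 0 ≤ s := hs_def ▸ Real.sqrt_nonneg _
  have hs2 : s ^ 2 = (1 - a * b + c ^ 2) ^ 2 - (a - b) ^ 2 := hs_def ▸ Real.sq_sqrt hsub
  have hsle : s ≤ a * b - c ^ 2 - 1 := by nlinarith [hs2, sq_nonneg (a - b)]
  have hD : 0 < 1 + a * b - c ^ 2 + s := by linarith
  have hT : 0 < a + b + 2 * c := by linarith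
  obtain ⟨L, hL_def⟩ : ∃ x : ℝ, x = (a + b + 2 * c) / (1 + a * b - c ^ 2 + s) := ⟨_, rfl⟩
  rw [← hL_def]
  have hL0 : 0 < L := hL_def ▸ div_pos hT hD
  have hLD : L * (1 + a * b - c ^ 2 + s) = a + b + 2 * c := by
    rw [hL_def]; exact div_mul_cancel₀ _ (ne_of_gt hD)
  have F1 : 0 ≤ (a + b) * L - L ^ 2 - 1 := by
    refine aux_cancel _ _ hD ?_
    have h : (1 + a * b - c ^ 2 + s) ^ 2 * ((a + b) * L - L ^ 2 - 1)
        = (a + b) * ((L * (1 + a * b - c ^ 2 + s)) * (1 + a * b - c ^ 2 + s))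
          - (L * (1 + a * b - c ^ 2 + s)) ^ 2 - (1 + a * b - c ^ 2 + s) ^ 2 := by ring
    rw [h, hLD]
    exact aux_keyT a b c s ha hb hc hphys hs0 hs2
  have keyE1 : (2 * a * ((a + b + 2 * c) * (1 + a * b - c ^ 2 + s))
        - (a + b + 2 * c) ^ 2 - (1 + a * b - c ^ 2 + s) ^ 2)
      * (2 * b * ((a + b + 2 * c) * (1 + a * b - c ^ 2 + s))
        - (a + b + 2 * c) ^ 2 - (1 + a * b - c ^ 2 + s) ^ 2)
      = (2 * c * ((a + b + 2 * c) * (1 + a * b - c ^ 2 + s))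
        - (a + b + 2 * c) ^ 2 + (1 + a * b - c ^ 2 + s) ^ 2) ^ 2 := by
    linear_combination ((-8)*c^2 + (-8)*c^2*s + (8)*c^4 + (-8)*b*c + (-8)*b*c*s + (8)*b*c^3 + (-2)*b^2 + (-2)*b^2*s + (2)*b^2*c^2 + (-8)*a*c + (-8)*a*c*s + (8)*a*c^3 + (-4)*a*b + (-4)*a*b*s + (-4)*a*b*c^2 + (-8)*a*b^2*c + (-2)*a*b^3 + (-2)*a^2 + (-2)*a^2*s + (2)*a^2*c^2 + (-8)*a^2*b*c + (-4)*a^2*b^2 + (-2)*a^3*b) * hs2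
  have F2 : (2 * a * L - L ^ 2 - 1) * (2 * b * L - L ^ 2 - 1)
      = (2 * c * L - L ^ 2 + 1) ^ 2 := by
    rw [← hLD] at keyE1
    exact aux_t1 a b c _ L (ne_of_gt hD) keyE1
  have hsum1 : 0 ≤ (2 * a * L - L ^ 2 - 1) + (2 * b * L - L ^ 2 - 1) := by linarith
  have hna : 0 ≤ 2 * a * L - L ^ 2 - 1 := aux_sign _ _ _ hsum1 F2
  have hnb : 0 ≤ 2 * b * L - L ^ 2 - 1 :=
    aux_sign (2 * b * L - L ^ 2 - 1) (2 * a * L - L ^ 2 - 1) (2 * c * L - L ^ 2 + 1)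
      (by linarith) (by linear_combination F2)
  have G1 : 0 ≤ (L ^ 2 + 1) * (a * b - c ^ 2) - (a + b) * L := by
    refine aux_cancel _ _ hD ?_
    have h : (1 + a * b - c ^ 2 + s) ^ 2 * ((L ^ 2 + 1) * (a * b - c ^ 2) - (a + b) * L)
        = (a * b - c ^ 2) * ((L * (1 + a * b - c ^ 2 + s)) ^ 2 + (1 + a * b - c ^ 2 + s) ^ 2)
          - (a + b) * ((L * (1 + a * b - c ^ 2 + s)) * (1 + a * b - c ^ 2 + s)) := by ring
    rw [h, hLD]
    exact aux_keyT2 a b c s ha hb hc hphys hs0 hsle hs2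
  have keyE2 : ((a * b - c ^ 2) * ((a + b + 2 * c) ^ 2 + (1 + a * b - c ^ 2 + s) ^ 2)
        - 2 * b * ((a + b + 2 * c) * (1 + a * b - c ^ 2 + s)))
      * ((a * b - c ^ 2) * ((a + b + 2 * c) ^ 2 + (1 + a * b - c ^ 2 + s) ^ 2)
        - 2 * a * ((a + b + 2 * c) * (1 + a * b - c ^ 2 + s)))
      = ((a * b - c ^ 2) * ((a + b + 2 * c) ^ 2 - (1 + a * b - c ^ 2 + s) ^ 2)
        - 2 * c * ((a + b + 2 * c) * (1 + a * b - c ^ 2 + s))) ^ 2 := by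
    linear_combination ((8)*c^4 + (8)*c^4*s + (-8)*c^6 + (8)*b*c^3 + (8)*b*c^3*s + (-8)*b*c^5 + (2)*b^2*c^2 + (2)*b^2*c^2*s + (-2)*b^2*c^4 + (8)*a*c^3 + (8)*a*c^3*s + (-8)*a*c^5 + (-4)*a*b*c^2 + (-4)*a*b*c^2*s + (12)*a*b*c^4 + (-8)*a*b^2*c + (-8)*a*b^2*c*s + (16)*a*b^2*c^3 + (-2)*a*b^3 + (-2)*a*b^3*s + (4)*a*b^3*c^2 + (2)*a^2*c^2 + (2)*a^2*c^2*s + (-2)*a^2*c^4 + (-8)*a^2*b*c + (-8)*a^2*b*c*s + (16)*a^2*b*c^3 + (-4)*a^2*b^2 + (-4)*a^2*b^2*s + (-8)*a^2*b^3*c + (-2)*a^2*b^4 + (-2)*a^3*b + (-2)*a^3*b*s + (4)*a^3*b*c^2 + (-8)*a^3*b^2*c + (-4)*a^3*b^3 + (-2)*a^4*b^2) * hs2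
  have F4 : ((L ^ 2 + 1) * (a * b - c ^ 2) - 2 * b * L)
      * ((L ^ 2 + 1) * (a * b - c ^ 2) - 2 * a * L)
      = ((L ^ 2 - 1) * (a * b - c ^ 2) - 2 * c * L) ^ 2 := by
    rw [← hLD] at keyE2
    exact aux_t2 a b c _ _ L (ne_of_gt hD) keyE2
  have hsum2 : 0 ≤ ((L ^ 2 + 1) * (a * b - c ^ 2) - 2 * b * L)
      + ((L ^ 2 + 1) * (a * b - c ^ 2) - 2 * a * L) := by linarith
  have hnb2 : 0 ≤ (L ^ 2 + 1) * (a * b - c ^ 2) - 2 * b * L := aux_sign _ _ _ hsum2 F4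
  have hna2 : 0 ≤ (L ^ 2 + 1) * (a * b - c ^ 2) - 2 * a * L :=
    aux_sign ((L ^ 2 + 1) * (a * b - c ^ 2) - 2 * a * L)
      ((L ^ 2 + 1) * (a * b - c ^ 2) - 2 * b * L)
      ((L ^ 2 - 1) * (a * b - c ^ 2) - 2 * c * L)
      (by linarith) (by linear_combination F4)
  have hL2 : (0:ℝ) < 2 * L := by linarith
  have hm0 : (0:ℝ) < a * b - c ^ 2 := by linarith
  constructor
  · -- c_x - z_opt ⪰ 0
    have hm1 : !![a, c; c, b] -
        ((L / 2) • !![(1 : ℝ), 1; 1, 1] + (1 / (2 * L)) • !![(1 : ℝ), -1; -1, 1])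
        = !![(2 * a * L - L ^ 2 - 1) / (2 * L), (2 * c * L - L ^ 2 + 1) / (2 * L);
             (2 * c * L - L ^ 2 + 1) / (2 * L), (2 * b * L - L ^ 2 - 1) / (2 * L)] := by
      ext i j
      fin_cases i <;> fin_cases j <;>
        simp [Matrix.sub_apply, Matrix.add_apply, Matrix.smul_apply, smul_eq_mul] <;>
        (field_simp; ring)
    rw [hm1]
    refine psd2 _ _ _ (div_nonneg hna (by positivity)) (div_nonneg hnb (by positivity))
      (le_of_eq ?_)
    rw [div_pow, div_mul_div_comm, F2]
    ring
  · -- z_opt - c_p⁻¹ ⪰ 0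
    have hinv : (!![a, -c; -c, b])⁻¹
        = !![b / (a * b - c ^ 2), c / (a * b - c ^ 2);
             c / (a * b - c ^ 2), a / (a * b - c ^ 2)] := by
      have hdet : (!![a, -c; -c, b]).det = a * b - c ^ 2 := by
        simp [Matrix.det_fin_two_of]; ring
      rw [Matrix.inv_def, hdet, Matrix.adjugate_fin_two_of, Ring.inverse_eq_inv]
      ext i j
      fin_cases i <;> fin_cases j <;>
        simp [Matrix.smul_apply, smul_eq_mul, div_eq_inv_mul]
    have hm2 : ((L / 2) • !![(1 : ℝ), 1; 1, 1] + (1 / (2 * L)) • !![(1 : ℝ), -1; -1, 1]) -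
        (!![a, -c; -c, b])⁻¹
        = !![((L ^ 2 + 1) * (a * b - c ^ 2) - 2 * b * L) / (2 * L * (a * b - c ^ 2)),
             ((L ^ 2 - 1) * (a * b - c ^ 2) - 2 * c * L) / (2 * L * (a * b - c ^ 2));
             ((L ^ 2 - 1) * (a * b - c ^ 2) - 2 * c * L) / (2 * L * (a * b - c ^ 2)),
             ((L ^ 2 + 1) * (a * b - c ^ 2) - 2 * a * L) / (2 * L * (a * b - c ^ 2))] := by
      rw [hinv]
      have hm0b : b * a - c ^ 2 ≠ 0 := by rw [mul_comm]; exact ne_of_gt hm0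
      ext i j
      fin_cases i <;> fin_cases j <;>
        simp [Matrix.sub_apply, Matrix.add_apply, Matrix.smul_apply, smul_eq_mul] <;>
        (field_simp <;> ring)
    rw [hm2]
    refine psd2 _ _ _ (div_nonneg hnb2 (by positivity)) (div_nonneg hna2 (by positivity))
      (le_of_eq ?_)
    rw [div_pow, div_mul_div_comm, F4]
    ring
end
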